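/- arXiv:2212.01656 — 4 statements merged into one kernel-verified Lean document; each statement's English description precedes it below -/
import Mathlib

section
/- Let (Ω,F,P) be a probability space carrying random variables Θ, Φ_1,…,Φ_N with values in Polish spaces such that Θ is independent of (Φ_1,…,Φ_N), and let Ψ be a random variable that is σ(Φ_i, Θ)-measurable for some fixed i. Then (Φ_1,…,Φ_N) and Ψ are conditionally independent given Φ_i. -/
/-!
Write `X = (Φ_1, …, Φ_N)`, `F = 1_A(X)`, `G = 1_B(Ψ) = 1_C(Φ_i, Θ)`. Since `Θ` is independent of
`X`, freezing `X` gives `E[G | X] = h(Φ_i)` with `h s = P((s, Θ) ∈ C)`, which is already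
`σ(Φ_i)`-measurable. The tower property and pulling out `F` then give
`E[F · G | Φ_i] = E[F · h(Φ_i) | Φ_i] = E[F | Φ_i] · h(Φ_i) = E[F | Φ_i] · E[G | Φ_i]`.
-/

open MeasureTheory ProbabilityTheory

section

variable {Ω V T E : Type*} {mΩ : MeasurableSpace Ω} [MeasurableSpace V] [MeasurableSpace T]
  [NormedAddCommGroup E] [NormedSpace ℝ E] [CompleteSpace E] {P : Measure Ω}

theorem integrable_indicator_one_comp [IsFiniteMeasure P] {f : Ω → V} (hf : Measurable f)
    {s : Set V} (hs : MeasurableSet s) :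
    Integrable (fun ω => s.indicator (fun _ => (1 : ℝ)) (f ω)) P :=
  ((integrable_const (1 : ℝ)).indicator (hs.preimage hf)).congr
    (.of_forall fun _ => Set.indicator_comp_right (g := fun _ => (1 : ℝ)) f)

theorem condExp_comp_prodMk_ae_eq_of_indepFun [IsFiniteMeasure P] {X : Ω → V} {Θ : Ω → T}
    (hX : Measurable X) (hΘ : Measurable Θ) (hind : IndepFun X Θ P)
    {f : V × T → E} (hf : StronglyMeasurable f) (hfi : Integrable f ((P.map X).prod (P.map Θ))) :
    P[fun ω => f (X ω, Θ ω) | MeasurableSpace.comap X inferInstance]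
      =ᵐ[P] fun ω => ∫ t, f (X ω, t) ∂(P.map Θ) := by
  have hY : Measurable fun ω => (X ω, Θ ω) := hX.prodMk hΘ
  have hmap : P.map (fun ω => (X ω, Θ ω)) = (P.map X).prod (P.map Θ) :=
    (indepFun_iff_map_prod_eq_prod_map_map hX.aemeasurable hΘ.aemeasurable).mp hind
  have hfi' : Integrable (fun ω => f (X ω, Θ ω)) P :=
    (hmap ▸ hfi).comp_measurable hY
  have hg : StronglyMeasurable fun v => ∫ t, f (v, t) ∂(P.map Θ) := hf.integral_prod_right'
  have hgi : Integrable (fun v => ∫ t, f (v, t) ∂(P.map Θ)) (P.map X) := hfi.integral_prod_left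
  refine (ae_eq_condExp_of_forall_setIntegral_eq hX.comap_le hfi'
    (fun _ _ _ => (hgi.comp_measurable hX).integrableOn) ?_
    (hg.comp_measurable (comap_measurable X)).aestronglyMeasurable).symm
  rintro _ ⟨D, hD, rfl⟩ -
  have hpre : (fun ω => (X ω, Θ ω)) ⁻¹' (D ×ˢ Set.univ) = X ⁻¹' D := by ext; simp
  calc ∫ ω in X ⁻¹' D, ∫ t, f (X ω, t) ∂(P.map Θ) ∂P
      = ∫ v in D, ∫ t, f (v, t) ∂(P.map Θ) ∂(P.map X) :=
        (setIntegral_map hD hg.aestronglyMeasurable hX.aemeasurable).symm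
    _ = ∫ z in D ×ˢ Set.univ, f z ∂(P.map fun ω => (X ω, Θ ω)) := by
        rw [hmap, setIntegral_prod f hfi.integrableOn, Measure.restrict_univ]
    _ = ∫ ω in X ⁻¹' D, f (X ω, Θ ω) ∂P := by
        rw [setIntegral_map (hD.prod .univ) hf.aestronglyMeasurable hY.aemeasurable, hpre]

theorem condExp_mul_ae_eq_mul_condExp_of_aestronglyMeasurable_condExp [IsFiniteMeasure P]
    {m m' : MeasurableSpace Ω} (hm : m ≤ m') (hm' : m' ≤ mΩ) {F G : Ω → ℝ}
    (hF : StronglyMeasurable[m'] F) (c : ℝ) (hF_bound : ∀ᵐ ω ∂P, ‖F ω‖ ≤ c)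
    (hG : Integrable G P) (hGm : AEStronglyMeasurable[m] (P[G | m']) P) :
    P[F * G | m] =ᵐ[P] P[F | m] * P[G | m] := by
  have : IsFiniteMeasure (P.trim hm') := isFiniteMeasure_trim hm'
  have hFi : Integrable F P := .of_bound (hF.mono hm').aestronglyMeasurable c hF_bound
  have hG_tower : P[G | m] =ᵐ[P] P[G | m'] :=
    (condExp_condExp_of_le hm hm').symm.trans
      (condExp_of_aestronglyMeasurable' (hm.trans hm') hGm integrable_condExp)
  calc P[F * G | m]
      =ᵐ[P] P[P[F * G | m'] | m] := (condExp_condExp_of_le hm hm').symm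
    _ =ᵐ[P] P[F * P[G | m'] | m] :=
        condExp_congr_ae (condExp_stronglyMeasurable_mul_of_bound hm' hF hG c hF_bound)
    _ =ᵐ[P] P[F | m] * P[G | m'] :=
        condExp_mul_of_aestronglyMeasurable_right hGm
          (integrable_condExp.bdd_mul (hF.mono hm').aestronglyMeasurable hF_bound) hFi
    _ =ᵐ[P] P[F | m] * P[G | m] := (Filter.EventuallyEq.refl _ _).mul hG_tower.symm

end

/-- If `Θ` is independent of `(Φ_1,…,Φ_N)` and `Ψ` is `σ(Φ_i, Θ)`-measurable,
then `(Φ_1,…,Φ_N)` and `Ψ` are conditionally independent given `Φ_i`: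
`E[1_A(Φ)·1_B(Ψ) | Φ_i] = E[1_A(Φ) | Φ_i]·E[1_B(Ψ) | Φ_i]` a.s., for all measurable `A, B`. -/
theorem stmt_5 {Ω S T U : Type*} [MeasurableSpace Ω] [MeasurableSpace S]
    [MeasurableSpace T] [MeasurableSpace U]
    (P : Measure Ω) [IsProbabilityMeasure P]
    {N : ℕ} (Φ : Fin N → Ω → S) (Θ : Ω → T) (Ψ : Ω → U)
    (hΦ : ∀ i, Measurable (Φ i)) (hΘ : Measurable Θ)
    (hind : IndepFun Θ (fun ω (i : Fin N) => Φ i ω) P)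
    (i : Fin N)
    (hΨ : Measurable[MeasurableSpace.comap (fun ω => (Φ i ω, Θ ω)) inferInstance] Ψ)
    {A : Set (Fin N → S)} (hA : MeasurableSet A)
    {B : Set U} (hB : MeasurableSet B) :
    condExp (MeasurableSpace.comap (Φ i) inferInstance) P
        (fun ω => A.indicator (fun _ => (1:ℝ)) (fun j => Φ j ω)
          * B.indicator (fun _ => (1:ℝ)) (Ψ ω))
      =ᵐ[P]
    fun ω =>
      (condExp (MeasurableSpace.comap (Φ i) inferInstance) P
        (fun ω => A.indicator (fun _ => (1:ℝ)) (fun j => Φ j ω)) ω)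
      * (condExp (MeasurableSpace.comap (Φ i) inferInstance) P
        (fun ω => B.indicator (fun _ => (1:ℝ)) (Ψ ω)) ω) := by
  set X : Ω → Fin N → S := fun ω j => Φ j ω
  have hX : Measurable X := measurable_pi_lambda _ hΦ
  obtain ⟨C, hC, hCΨ⟩ := hΨ hB
  have hBC : ∀ ω, B.indicator (fun _ => (1:ℝ)) (Ψ ω) = C.indicator (fun _ => 1) (Φ i ω, Θ ω) :=
    fun ω => by
      rw [← Set.indicator_comp_right (g := fun _ => (1:ℝ)) Ψ, ← hCΨ]
      exact Set.indicator_comp_right (g := fun _ => (1:ℝ)) _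
  simp only [hBC]
  have hle : MeasurableSpace.comap (Φ i) inferInstance ≤ MeasurableSpace.comap X inferInstance :=
    ((measurable_pi_apply i).comp (comap_measurable X)).comap_le
  have hfrozen := condExp_comp_prodMk_ae_eq_of_indepFun hX hΘ hind.symm
    (f := fun z => C.indicator (fun _ => (1:ℝ)) (z.1 i, z.2))
    ((stronglyMeasurable_const.indicator hC).comp_measurable (by fun_prop))
    (integrable_indicator_one_comp (by fun_prop) hC)
  have hslice : StronglyMeasurable fun s => ∫ t, C.indicator (fun _ => (1:ℝ)) (s, t) ∂(P.map Θ) :=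
    (stronglyMeasurable_const.indicator hC).integral_prod_right'
  refine condExp_mul_ae_eq_mul_condExp_of_aestronglyMeasurable_condExp hle hX.comap_le
    ((stronglyMeasurable_const.indicator hA).comp_measurable (comap_measurable X)) 1
    (.of_forall fun _ => ?_) (integrable_indicator_one_comp ((hΦ i).prodMk hΘ) hC)
    ((hslice.comp_measurable (comap_measurable (Φ i))).aestronglyMeasurable.congr hfrozen.symm)
  exact (norm_indicator_le_norm_self _ _).trans (by simp)
end

section
/- Let X, Γ be finite sets, Z = [0,1] with the uniform measure ν, and Ψ : X × P(X) × Γ × Z → X a measurable map satisfying: for all x, γ and all m, m̃ ∈ P(X), ν({z : Ψ(x,m,γ,z) ≠ Ψ(x,m̃,γ,z)}) ≤ w(dist(m,m̃)) for a nondecreasing w : [0,∞) → [0,1]. Let ρ be a probability measure on a finite set R of functions φ : X → Γ. Define q(p) ∈ P(X) as the law of Ψ(y, p, φ(y), z) where (y, φ, z) ∼ p ⊗ ρ ⊗ ν. Then for all p, p̃ ∈ P(X): dist(q(p), q(p̃)) ≤ w(dist(p,p̃)) + dist(p,p̃). Consequently, if w(s) → 0 as s → 0+, then q : P(X) → P(X)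 is continuous for the total variation metric. -/
/-!
For fixed `y` and `φ`, the laws of `Ψ(y, p, φ y, ·)` and `Ψ(y, p̃, φ y, ·)` are coupled through
the same `z`, so they differ in total variation by at most the measure of the set where the two
maps disagree, hence by at most `w(dist(p, p̃))`. Mixing these laws with the weights `p ⊗ ρ` and
`p̃ ⊗ ρ` adds at most the distance of the weights, which is `dist(p, p̃)`.
Continuity follows because monotonicity and `w ≥ 0` force `w 0 = 0`.
-/

open MeasureTheory Filter

/-- Total variation metric on (probability vectors over) a finite set. -/
noncomputable def tv {X : Type*} [Fintype X] (m m' : X → ℝ) : ℝ :=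
  (1/2 : ℝ) * ∑ e, |m e - m' e|

/-- Probability vectors over a finite set. -/
def IsProb {X : Type*} [Fintype X] (m : X → ℝ) : Prop :=
  (∀ e, 0 ≤ m e) ∧ ∑ e, m e = 1

open Topology Finset

lemma tv_nonneg {X : Type*} [Fintype X] (m m' : X → ℝ) : 0 ≤ tv m m' :=
  mul_nonneg (by norm_num) (sum_nonneg fun _ _ => abs_nonneg _)

lemma IsProb.prod {ι κ : Type*} [Fintype ι] [Fintype κ] {p : ι → ℝ} {r : κ → ℝ}
    (hp : IsProb p) (hr : IsProb r) : IsProb (fun i : ι × κ => p i.1 * r i.2) :=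
  ⟨fun i => mul_nonneg (hp.1 i.1) (hr.1 i.2), by
    rw [Fintype.sum_prod_type, ← Fintype.sum_mul_sum, hp.2, hr.2, one_mul]⟩

lemma tv_prod_right {ι κ : Type*} [Fintype ι] [Fintype κ] (p p' : ι → ℝ) {r : κ → ℝ}
    (hr : IsProb r) :
    tv (fun i : ι × κ => p i.1 * r i.2) (fun i => p' i.1 * r i.2) = tv p p' := by
  unfold tv
  congr 1
  rw [Fintype.sum_prod_type]
  refine sum_congr rfl fun i _ => ?_
  simp_rw [← sub_mul, abs_mul, abs_of_nonneg (hr.1 _), ← mul_sum, hr.2, mul_one]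

lemma tv_mixture_le {ι X : Type*} [Fintype ι] [Fintype X] {a a' : ι → ℝ} {k k' : ι → X → ℝ}
    {c : ℝ} (ha : ∀ i, 0 ≤ a i) (hk' : ∀ i, IsProb (k' i)) (hc : ∀ i, tv (k i) (k' i) ≤ c) :
    tv (fun b => ∑ i, a i * k i b) (fun b => ∑ i, a' i * k' i b) ≤ (∑ i, a i) * c + tv a a' := by
  have hc' : ∀ i, ∑ b, |k i b - k' i b| ≤ 2 * c := fun i => by
    have := hc i; unfold tv at this; linarith
  have hsplit : ∀ i b, a i * k i b - a' i * k' i b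
      = a i * (k i b - k' i b) + (a i - a' i) * k' i b := fun _ _ => by ring
  unfold tv
  calc 1 / 2 * ∑ b, |∑ i, a i * k i b - ∑ i, a' i * k' i b|
      ≤ 1 / 2 * ∑ b, ∑ i, (a i * |k i b - k' i b| + |a i - a' i| * k' i b) := by
        gcongr with b
        rw [← sum_sub_distrib]
        refine (abs_sum_le_sum_abs _ _).trans (sum_le_sum fun i _ => ?_)
        rw [hsplit]
        refine (abs_add_le _ _).trans_eq ?_
        rw [abs_mul, abs_mul, abs_of_nonneg (ha i), abs_of_nonneg ((hk' i).1 b)]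
    _ = 1 / 2 * ∑ i, (a i * ∑ b, |k i b - k' i b| + |a i - a' i|) := by
        rw [sum_comm]
        simp only [sum_add_distrib, ← mul_sum, (hk' _).2, mul_one]
    _ ≤ 1 / 2 * ∑ i, (a i * (2 * c) + |a i - a' i|) := by
        gcongr with i
        exacts [ha i, hc' i]
    _ = (∑ i, a i) * c + 1 / 2 * ∑ i, |a i - a' i| := by
        rw [sum_add_distrib, ← sum_mul]
        ring

section Law

variable {α X : Type*} [MeasurableSpace α] [Fintype X] [MeasurableSpace X]
  [MeasurableSingletonClass X]

noncomputable def law (μ : Measure α) (g : α → X) (b : X) : ℝ :=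
  μ.real {z | g z = b}

lemma sum_measureReal_inter_fiber (μ : Measure α) [IsFiniteMeasure μ] {g : α → X}
    (hg : Measurable g) (s : Set α) : ∑ b, μ.real ({z | g z = b} ∩ s) = μ.real s := by
  have := sum_measureReal_preimage_singleton (μ := μ.restrict s) univ
    (fun b _ => hg (measurableSet_singleton b))
  simp only [coe_univ, Set.preimage_univ, measureReal_restrict_apply_univ] at this
  rw [← this]
  exact sum_congr rfl fun b _ => (measureReal_restrict_apply (hg (measurableSet_singleton b))).symm

lemma isProb_law (μ : Measure α) [IsProbabilityMeasure μ] {g : α → X} (hg : Measurable g) :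
    IsProb (law μ g) := by
  refine ⟨fun b => measureReal_nonneg, ?_⟩
  simpa [law] using sum_measureReal_inter_fiber μ hg Set.univ

lemma tv_law_le (μ : Measure α) [IsFiniteMeasure μ] {g g' : α → X} (hg : Measurable g)
    (hg' : Measurable g') : tv (law μ g) (law μ g') ≤ μ.real {z | g z ≠ g' z} := by
  set D := {z | g z ≠ g' z}
  have hD : MeasurableSet D := (measurableSet_eq_fun hg hg').compl
  have hfiber : ∀ b, law μ g b - law μ g' b
      = μ.real ({z | g z = b} ∩ D) - μ.real ({z | g' z = b} ∩ D) := fun b => by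
    have hagree : {z | g z = b} \ D = {z | g' z = b} \ D := by
      ext z
      simp only [D, Set.mem_sdiff, Set.mem_ofPred_eq, not_not]
      constructor <;> rintro ⟨h, he⟩ <;> exact ⟨by rw [← h, he], he⟩
    unfold law
    rw [← measureReal_inter_add_sdiff (s := {z | g z = b}) hD,
      ← measureReal_inter_add_sdiff (s := {z | g' z = b}) hD, hagree]
    ring
  unfold tv
  calc 1 / 2 * ∑ b, |law μ g b - law μ g' b|
      ≤ 1 / 2 * ∑ b, (μ.real ({z | g z = b} ∩ D) + μ.real ({z | g' z = b} ∩ D)) := by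
        gcongr with b
        rw [hfiber]
        exact (abs_sub _ _).trans_eq (by simp only [abs_of_nonneg measureReal_nonneg])
    _ = μ.real D := by
        rw [sum_add_distrib, sum_measureReal_inter_fiber μ hg, sum_measureReal_inter_fiber μ hg']
        ring

end Law

section MixedLaw

variable {α X Γ : Type*} [MeasurableSpace α] [Fintype X] [DecidableEq X] [Fintype Γ]

/-- The law of `K y (φ y) z` when `(y, φ, z) ∼ p ⊗ ρ ⊗ ν`. -/
noncomputable def mixedLaw (ν : Measure α) (p : X → ℝ) (ρ : (X → Γ) → ℝ)
    (K : X → Γ → α → X) (b : X) : ℝ :=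
  ∑ y, ∑ φ, p y * ρ φ * law ν (K y (φ y)) b

lemma mixedLaw_eq_sum_prod (ν : Measure α) (p : X → ℝ) (ρ : (X → Γ) → ℝ) (K : X → Γ → α → X) :
    mixedLaw ν p ρ K =
      fun b => ∑ i : X × (X → Γ), p i.1 * ρ i.2 * law ν (K i.1 (i.2 i.1)) b :=
  funext fun _ => by rw [Fintype.sum_prod_type]; rfl

lemma tv_mixedLaw_le [MeasurableSpace X] [MeasurableSingletonClass X] (ν : Measure α)
    [IsProbabilityMeasure ν] {p p' : X → ℝ} {ρ : (X → Γ) → ℝ}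
    {K K' : X → Γ → α → X} {c : ℝ} (hp : IsProb p) (hρ : IsProb ρ)
    (hK : ∀ y γ, Measurable (K y γ)) (hK' : ∀ y γ, Measurable (K' y γ))
    (hKK' : ∀ y γ, ν.real {z | K y γ z ≠ K' y γ z} ≤ c) :
    tv (mixedLaw ν p ρ K) (mixedLaw ν p' ρ K') ≤ c + tv p p' := by
  rw [mixedLaw_eq_sum_prod, mixedLaw_eq_sum_prod]
  have := tv_mixture_le (a' := fun i : X × (X → Γ) => p' i.1 * ρ i.2) (hp.prod hρ).1
    (fun i => isProb_law ν (hK' i.1 (i.2 i.1)))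
    (fun i => (tv_law_le ν (hK i.1 (i.2 i.1)) (hK' i.1 (i.2 i.1))).trans (hKK' _ _))
  rwa [(hp.prod hρ).2, one_mul, tv_prod_right _ _ hρ] at this

end MixedLaw

lemma Monotone.tendsto_nhdsGE_zero {w : ℝ → ℝ} (hmono : Monotone w) (hw0 : 0 ≤ w 0)
    (hw : Tendsto w (𝓝[>] 0) (𝓝 0)) : Tendsto w (𝓝[≥] 0) (𝓝 0) := by
  have hzero : w 0 = 0 := le_antisymm
    (_root_.ge_of_tendsto hw (eventually_nhdsWithin_of_forall fun _ hs => hmono hs.le)) hw0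
  rw [← nhdsGT_sup_nhdsWithin_singleton, nhdsWithin_singleton]
  exact tendsto_sup.2 ⟨hw, by simpa [hzero] using tendsto_pure_nhds w 0⟩

theorem stmt_10_general {X Γ : Type*} [Fintype X] [DecidableEq X] [Fintype Γ]
    [MeasurableSpace X] [MeasurableSingletonClass X]
    (ν : Measure ℝ) (hν : ν = volume.restrict (Set.Icc (0:ℝ) 1))
    (Ψ : X → (X → ℝ) → Γ → ℝ → X)
    (hΨmeas : ∀ x m γ, Measurable (fun z => Ψ x m γ z))
    (w : ℝ → ℝ) (hwmono : Monotone w) (hw0 : ∀ s, 0 ≤ w s)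
    (ρ : (X → Γ) → ℝ) (hρ0 : ∀ φ, 0 ≤ ρ φ) (hρ1 : ∑ φ, ρ φ = 1)
    (hΨ : ∀ (x : X) (γ : Γ) (m m' : X → ℝ), IsProb m → IsProb m' →
      ν {z | Ψ x m γ z ≠ Ψ x m' γ z} ≤ ENNReal.ofReal (w (tv m m')))
    (q : (X → ℝ) → X → ℝ)
    (hq : ∀ p b, q p b = ∑ y, ∑ φ, p y * ρ φ * (ν {z | Ψ y p (φ y) z = b}).toReal) :
    (∀ p p' : X → ℝ, IsProb p → IsProb p' →
        tv (q p) (q p') ≤ w (tv p p') + tv p p') ∧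
    (Tendsto w (nhdsWithin 0 (Set.Ioi 0)) (nhds 0) →
      ∀ (pn : ℕ → X → ℝ) (p : X → ℝ), (∀ n, IsProb (pn n)) → IsProb p →
        Tendsto (fun n => tv (pn n) p) atTop (nhds 0) →
        Tendsto (fun n => tv (q (pn n)) (q p)) atTop (nhds 0)) := by
  have : IsProbabilityMeasure ν := ⟨by simp [hν]⟩
  have hq' : ∀ p, q p = mixedLaw ν p ρ (Ψ · p) := fun p => funext (hq p)
  have hlip : ∀ p p' : X → ℝ, IsProb p → IsProb p' → tv (q p) (q p') ≤ w (tv p p') + tv p p' :=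
    fun p p' hp hp' => by
      rw [hq', hq']
      exact tv_mixedLaw_le ν hp ⟨hρ0, hρ1⟩ (hΨmeas · p) (hΨmeas · p')
        fun y γ => ENNReal.toReal_le_of_le_ofReal (hw0 _) (hΨ y γ p p' hp hp')
  refine ⟨hlip, fun hw pn p hpn hp hconv => ?_⟩
  have hwn : Tendsto (fun n => w (tv (pn n) p)) atTop (𝓝 0) :=
    (hwmono.tendsto_nhdsGE_zero (hw0 0) hw).comp
      (tendsto_nhdsWithin_iff.2 ⟨hconv, .of_forall fun n => tv_nonneg _ _⟩)
  exact squeeze_zero (fun n => tv_nonneg _ _) (fun n => hlip (pn n) p (hpn n) hp)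
    (by simpa using hwn.add hconv)

/-- With `Z = [0,1]` and `ν` the uniform measure, if the dynamics `Ψ`
satisfies `ν({z : Ψ(x,m,γ,z) ≠ Ψ(x,m̃,γ,z)}) ≤ w(dist(m,m̃))` for a nondecreasing
`w : [0,∞) → [0,1]`, and `q(p)` denotes the law of `Ψ(y,p,φ(y),z)` under `p ⊗ ρ ⊗ ν`,
then `dist(q(p), q(p̃)) ≤ w(dist(p,p̃)) + dist(p,p̃)`; consequently when
`w(s) → 0` as `s → 0+`, the map `q` is continuous in total variation. -/
theorem stmt_10 {X Γ : Type*} [Fintype X] [DecidableEq X] [Nonempty X] [Fintype Γ]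
    [MeasurableSpace X] [MeasurableSingletonClass X]
    (ν : Measure ℝ) (hν : ν = volume.restrict (Set.Icc (0:ℝ) 1))
    (Ψ : X → (X → ℝ) → Γ → ℝ → X)
    (hΨmeas : ∀ x m γ, Measurable (fun z => Ψ x m γ z))
    (w : ℝ → ℝ) (hwmono : Monotone w) (hw0 : ∀ s, 0 ≤ w s) (hw1 : ∀ s, w s ≤ 1)
    (ρ : (X → Γ) → ℝ) (hρ0 : ∀ φ, 0 ≤ ρ φ) (hρ1 : ∑ φ, ρ φ = 1)
    (hΨ : ∀ (x : X) (γ : Γ) (m m' : X → ℝ), IsProb m → IsProb m' →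
      ν {z | Ψ x m γ z ≠ Ψ x m' γ z} ≤ ENNReal.ofReal (w (tv m m')))
    (q : (X → ℝ) → X → ℝ)
    (hq : ∀ p b, q p b = ∑ y, ∑ φ, p y * ρ φ * (ν {z | Ψ y p (φ y) z = b}).toReal) :
    (∀ p p' : X → ℝ, IsProb p → IsProb p' →
        tv (q p) (q p') ≤ w (tv p p') + tv p p') ∧
    (Tendsto w (nhdsWithin 0 (Set.Ioi 0)) (nhds 0) →
      ∀ (pn : ℕ → X → ℝ) (p : X → ℝ), (∀ n, IsProb (pn n)) → IsProb p →
        Tendsto (fun n => tv (pn n) p) atTop (nhds 0) →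
        Tendsto (fun n => tv (q (pn n)) (q p)) atTop (nhds 0)) :=
  stmt_10_general ν hν Ψ hΨmeas w hwmono hw0 ρ hρ0 hρ1 hΨ q hq
end

section
/- Let X be a finite set and for each N let x^N ∈ X^N with empirical measures μ_N(x^N) := (1/N)∑_{j=1}^N δ_{x^N_j} converging (in total variation) to p ∈ P(X). Fix l ≥ 1 and define the sampling-without-replacement measure μ_{N:l}(x^N) := ((N−l)!/N!)·∑_{λ ∈ I_{N:l}} δ_{(x^N_{λ(1)},…,x^N_{λ(l)})} on X^l, where I_{N:l} is the set of injections from {1,…,l} into {1,…,N}. Then μ_{N:l}(x^N) converges to the product measure p^{⊗l} in P(X^l). -/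
/-!
Drawing `l` indices with replacement from `x^N` gives exactly the product `q^{⊗l}` of the
empirical measure `q`, and `‖q^{⊗l} - p^{⊗l}‖ ≤ l ‖q - p‖` by telescoping one coordinate at a
time. Drawing without replacement only discards the non-injective index maps, a fraction
`1 - N(N-1)⋯(N-l+1)/N^l → 0` of all of them, and renormalising after discarding such a
vanishing fraction moves the measure by at most that fraction in total variation.
-/

open Filter Finset Topology

section Counting

variable {X α : Type*} [DecidableEq X] [Fintype α] {l : ℕ}

theorem sum_card_filter_forall_eq [Fintype X] {β : Type*} [Fintype β] (φ : β → Fin l → X) :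
    ∑ v : Fin l → X, #{b | ∀ i, φ b i = v i} = Fintype.card β := by
  simp only [← funext_iff]
  rw [← card_univ, card_eq_sum_card_fiberwise fun b _ => mem_univ (φ b)]

theorem card_filter_comp_eq_prod (g : α → X) (v : Fin l → X) :
    #{f : Fin l → α | ∀ i, g (f i) = v i} = ∏ i, #{a | g a = v i} := by
  rw [← Fintype.card_subtype,
    Fintype.card_congr (Equiv.subtypePiEquivPi (p := fun i a => g a = v i)), Fintype.card_pi]
  exact prod_congr rfl fun i _ => Fintype.card_subtype _

theorem sum_card_filter_embedding_eq [Fintype X] (g : α → X) :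
    ∑ v : Fin l → X, #{f : Fin l ↪ α | ∀ i, g (f i) = v i}
      = (Fintype.card α).descFactorial l := by
  rw [sum_card_filter_forall_eq, Fintype.card_embedding_eq, Fintype.card_fin]

theorem sum_card_filter_fun_eq [Fintype X] (g : α → X) :
    ∑ v : Fin l → X, #{f : Fin l → α | ∀ i, g (f i) = v i} = Fintype.card α ^ l := by
  rw [sum_card_filter_forall_eq, Fintype.card_fun, Fintype.card_fin]

theorem card_filter_embedding_le (g : α → X) (v : Fin l → X) :
    #{f : Fin l ↪ α | ∀ i, g (f i) = v i} ≤ #{f : Fin l → α | ∀ i, g (f i) = v i} :=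
  card_le_card_of_injOn (⇑) (fun f hf => by simpa using hf) DFunLike.coe_injective.injOn

end Counting

theorem sum_abs_div_sub_div_le {ι : Type*} [Fintype ι] {a b : ι → ℝ} (ha : ∀ i, 0 ≤ a i)
    (hab : ∀ i, a i ≤ b i) (hpos : 0 < ∑ i, a i) :
    ∑ i, |a i / ∑ j, a j - b i / ∑ j, b j| ≤ 2 * (1 - (∑ i, a i) / ∑ i, b i) := by
  set d := ∑ i, a i
  set n := ∑ i, b i
  have hdn : d ≤ n := sum_le_sum fun i _ => hab i
  have hn : 0 < n := hpos.trans_le hdn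
  have hterm : ∀ i, |a i / d - b i / n| ≤ (a i / d - a i / n) + (b i - a i) / n := by
    intro i
    have h₁ : 0 ≤ a i / d - a i / n := sub_nonneg.2 (div_le_div_of_nonneg_left (ha i) hpos hdn)
    have h₂ : 0 ≤ (b i - a i) / n := div_nonneg (sub_nonneg.2 (hab i)) hn.le
    calc |a i / d - b i / n| = |(a i / d - a i / n) - (b i - a i) / n| := by ring_nf
      _ ≤ |a i / d - a i / n| + |(b i - a i) / n| := abs_sub _ _
      _ = _ := by rw [abs_of_nonneg h₁, abs_of_nonneg h₂]
  calc ∑ i, |a i / d - b i / n| ≤ ∑ i, ((a i / d - a i / n) + (b i - a i) / n) :=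
        sum_le_sum fun i _ => hterm i
    _ = 2 * (1 - d / n) := by
        rw [sum_add_distrib, sum_sub_distrib, ← sum_div, ← sum_div, ← sum_div, sum_sub_distrib]
        field_simp
        ring

theorem sum_abs_prod_sub_prod_le {X : Type*} [Fintype X] {q p : X → ℝ} (hq0 : ∀ e, 0 ≤ q e)
    (hp0 : ∀ e, 0 ≤ p e) (hq1 : ∑ e, q e ≤ 1) (hp1 : ∑ e, p e ≤ 1) (m : ℕ) :
    ∑ v : Fin m → X, |∏ i, q (v i) - ∏ i, p (v i)| ≤ m * ∑ e, |q e - p e| := by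
  induction m with
  | zero => simp
  | succ m ih =>
    have hP : ∑ w : Fin m → X, ∏ i, p (w i) ≤ 1 := by
      rw [← Fintype.sum_pow]
      exact pow_le_one₀ (sum_nonneg fun e _ => hp0 e) hp1
    have hcons : ∀ (f : X → ℝ) (z : X × (Fin m → X)),
        ∏ i, f (Fin.consEquiv (fun _ => X) z i) = f z.1 * ∏ i, f (z.2 i) := by
      intro f z
      simp [Fin.prod_univ_succ, Fin.consEquiv]
    have hsplit : ∀ z : X × (Fin m → X), |q z.1 * ∏ i, q (z.2 i) - p z.1 * ∏ i, p (z.2 i)| ≤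
        q z.1 * |∏ i, q (z.2 i) - ∏ i, p (z.2 i)| + |q z.1 - p z.1| * ∏ i, p (z.2 i) := by
      intro z
      calc _ = |q z.1 * (∏ i, q (z.2 i) - ∏ i, p (z.2 i)) + (q z.1 - p z.1) * ∏ i, p (z.2 i)| := by
            ring_nf
        _ ≤ _ := by
          refine (abs_add_le _ _).trans_eq ?_
          rw [abs_mul, abs_mul, abs_of_nonneg (hq0 z.1),
            abs_of_nonneg (prod_nonneg fun i _ => hp0 _)]
    rw [← (Fin.consEquiv fun _ => X).sum_comp]
    simp only [hcons]
    calc _ ≤ ∑ z : X × (Fin m → X), (q z.1 * |∏ i, q (z.2 i) - ∏ i, p (z.2 i)|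
            + |q z.1 - p z.1| * ∏ i, p (z.2 i)) := sum_le_sum fun z _ => hsplit z
      _ = (∑ e, q e) * ∑ w : Fin m → X, |∏ i, q (w i) - ∏ i, p (w i)|
          + (∑ e, |q e - p e|) * ∑ w : Fin m → X, ∏ i, p (w i) := by
          simp only [Fintype.sum_prod_type, sum_add_distrib, ← mul_sum, ← sum_mul]
      _ ≤ 1 * (m * ∑ e, |q e - p e|) + (∑ e, |q e - p e|) * 1 := by
          gcongr
      _ = (m + 1 : ℕ) * ∑ e, |q e - p e| := by push_cast; ring

theorem tendsto_descFactorial_div_pow (l : ℕ) :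
    Tendsto (fun N : ℕ => (N.descFactorial l : ℝ) / (N : ℝ) ^ l) atTop (𝓝 1) := by
  have hprod : Tendsto (fun N : ℕ => ∏ j ∈ range l, (1 - (j : ℝ) / N)) atTop (𝓝 1) := by
    simpa using tendsto_finsetProd (range l) fun (j : ℕ) _ =>
      (tendsto_const_nhds (x := (1 : ℝ))).sub (tendsto_const_div_atTop_nhds_zero_nat (j : ℝ))
  refine hprod.congr' ?_
  filter_upwards [eventually_ge_atTop l, eventually_gt_atTop 0] with N hlN hN
  rw [Nat.descFactorial_eq_prod_range, Nat.cast_prod, pow_eq_prod_const, ← prod_div_distrib]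
  refine prod_congr rfl fun j hj => ?_
  rw [Nat.cast_sub ((mem_range.1 hj).le.trans hlN), sub_div, div_self (by positivity)]

theorem sum_abs_sample_sub_prod_le {X : Type*} [Fintype X] [DecidableEq X] {l N : ℕ}
    (hlN : l ≤ N) (g : Fin N → X) {p : X → ℝ} (hp0 : ∀ e, 0 ≤ p e) (hp1 : ∑ e, p e ≤ 1) :
    ∑ v : Fin l → X,
        |((N - l).factorial / N.factorial : ℝ) * #{f : Fin l ↪ Fin N | ∀ i, g (f i) = v i}
          - ∏ i, p (v i)|
      ≤ 2 * (1 - N.descFactorial l / (N : ℝ) ^ l) + l * ∑ e, |(#{j | g j = e} : ℝ) / N - p e| := by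
  set a : (Fin l → X) → ℝ := fun v => #{f : Fin l ↪ Fin N | ∀ i, g (f i) = v i}
  set b : (Fin l → X) → ℝ := fun v => #{f : Fin l → Fin N | ∀ i, g (f i) = v i}
  set q : X → ℝ := fun e => (#{j | g j = e} : ℝ) / N
  have hsa : ∑ v, a v = N.descFactorial l := by
    simpa [a] using congrArg (Nat.cast (R := ℝ)) (sum_card_filter_embedding_eq (X := X) g)
  have hsb : ∑ v, b v = (N : ℝ) ^ l := by
    simpa [b] using congrArg (Nat.cast (R := ℝ)) (sum_card_filter_fun_eq (X := X) g)
  have hd : (0 : ℝ) < N.descFactorial l := by exact_mod_cast Nat.descFactorial_pos.2 hlN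
  have hfrac : ((N - l).factorial / N.factorial : ℝ) = 1 / N.descFactorial l := by
    rw [← Nat.factorial_mul_descFactorial hlN, Nat.cast_mul]
    field_simp
  have hbq : ∀ v, b v / (N : ℝ) ^ l = ∏ i, q (v i) := by
    intro v
    simp only [b, q, card_filter_comp_eq_prod, Nat.cast_prod, prod_div_distrib, prod_const,
      card_univ, Fintype.card_fin]
  have hq1 : ∑ e, q e ≤ 1 := by
    have h : ∑ e, #{j | g j = e} = N := by
      rw [← card_eq_sum_card_fiberwise fun j _ => mem_univ (g j), card_univ, Fintype.card_fin]
    simp only [q, ← sum_div]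
    rw [← Nat.cast_sum, h]
    exact div_self_le_one _
  have htv := sum_abs_div_sub_div_le (a := a) (b := b) (fun v => by positivity)
    (fun v => Nat.cast_le.2 (card_filter_embedding_le g v)) (hsa ▸ hd)
  rw [hsa, hsb] at htv
  calc ∑ v, |((N - l).factorial / N.factorial : ℝ) * a v - ∏ i, p (v i)|
      ≤ ∑ v, (|a v / N.descFactorial l - b v / (N : ℝ) ^ l| + |∏ i, q (v i) - ∏ i, p (v i)|) :=
        sum_le_sum fun v _ => by
          rw [hfrac, one_div_mul_eq_div, ← hbq]
          exact abs_sub_le _ _ _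
    _ ≤ _ := by
        rw [sum_add_distrib]
        exact add_le_add htv
          (sum_abs_prod_sub_prod_le (fun e => by positivity) hp0 hq1 hp1 l)

theorem stmt_11_general {X : Type*} [Fintype X] [DecidableEq X]
    (x : (N : ℕ) → Fin N → X) (p : X → ℝ)
    (hp0 : ∀ e, 0 ≤ p e) (hp1 : ∑ e, p e = 1)
    (hconv : Tendsto
      (fun N : ℕ => (1/2 : ℝ) * ∑ e, |(1/(N : ℝ)) * ∑ i, (if x N i = e then (1:ℝ) else 0) - p e|)
      atTop (nhds 0))
    (l : ℕ) :
    Tendsto (fun N : ℕ => (1/2 : ℝ) * ∑ v : Fin l → X,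
        |(((N - l).factorial : ℝ)/(N.factorial : ℝ)) *
            ((Finset.univ.filter
              (fun lam : Fin l ↪ Fin N => ∀ i, x N (lam i) = v i)).card : ℝ)
          - ∏ i, p (v i)|)
      atTop (nhds 0) := by
  have hempirical : ∀ (N : ℕ) e, (1 / (N : ℝ)) * ∑ i, (if x N i = e then (1 : ℝ) else 0)
      = (#{j | x N j = e} : ℝ) / N := fun N e => by
    rw [sum_boole, one_div_mul_eq_div]
  simp only [hempirical] at hconv
  have hbound := ((tendsto_const_nhds (x := (1 : ℝ))).sub
    (tendsto_descFactorial_div_pow l)).add (hconv.const_mul (l : ℝ))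
  rw [sub_self, mul_zero, add_zero] at hbound
  refine squeeze_zero' (Eventually.of_forall fun N => by positivity) ?_ hbound
  filter_upwards [eventually_ge_atTop l] with N hlN
  linarith [sum_abs_sample_sub_prod_le hlN (x N) hp0 hp1.le]

/-- If the empirical measures `μ_N(x^N)` of tuples `x^N ∈ X^N` converge in
total variation to `p`, then for fixed `l ≥ 1` the sampling-without-replacement measures
`μ_{N:l}(x^N) = ((N−l)!/N!)·∑_{λ injection} δ_{(x^N_{λ(1)},…,x^N_{λ(l)})}` converge to
the product measure `p^{⊗l}` on `X^l`. -/
theorem stmt_11 {X : Type*} [Fintype X] [DecidableEq X] [Nonempty X]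
    (x : (N : ℕ) → Fin N → X) (p : X → ℝ)
    (hp0 : ∀ e, 0 ≤ p e) (hp1 : ∑ e, p e = 1)
    (hconv : Tendsto
      (fun N : ℕ => (1/2 : ℝ) * ∑ e, |(1/(N : ℝ)) * ∑ i, (if x N i = e then (1:ℝ) else 0) - p e|)
      atTop (nhds 0))
    (l : ℕ) (hl : 1 ≤ l) :
    Tendsto (fun N : ℕ => (1/2 : ℝ) * ∑ v : Fin l → X,
        |(((N - l).factorial : ℝ)/(N.factorial : ℝ)) *
            ((Finset.univ.filter
              (fun lam : Fin l ↪ Fin N => ∀ i, x N (lam i) = v i)).card : ℝ)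
          - ∏ i, p (v i)|)
      atTop (nhds 0) :=
  stmt_11_general x p hp0 hp1 hconv l
end

section
/- Let (Ω,F,P) be a probability space with random variables X_0, ξ = (ξ_1,…,ξ_T) (all with values in standard Borel spaces), Φ, and μ, such that (X_0, ξ) is independent of (Φ, μ). Fix t, and suppose X^{(t)} is a random variable measurable with respect to σ(X_0, ξ_1,…,ξ_t, Φ, μ^{(t)}), where μ^{(t)} is a measurable function of μ. Let P_φ := P(·|Φ=φ) for an atom φ of Φ. Then under P_φ, X^{(t)} and μ are conditionally independent given μ^{(t)}: for all measurable A, B, E_φ[1_A(X^{(t)})·1_B(μ) | μ^{(t)}] = E_φ[1_A(X^{(t)}) | μ^{(t)}]·E_φ[1_B(μ) | μ^{(t)}] a.s. -/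
/-!
Write `W = (X₀, ξ)` and `P_φ = P(· | Φ = φ)`. The event `{Φ = φ}` is determined by `(Φ, μ)`, so
conditioning on it keeps `W` independent of `μ`; and `P_φ`-a.s. `Φ = φ`, so
`1_A(X^{(t)}) = 1_D(W, μ^{(t)})` for a measurable `D`. By the freezing lemma,
`E_φ[1_D(W, μ^{(t)}) | μ] = k(μ^{(t)})` with `k y = P_φ(W ∈ D_y)`, which is already
`σ(μ^{(t)})`-measurable. Conditioning first on `σ(μ) ⊇ σ(μ^{(t)})` and pulling out the
`σ(μ)`-measurable factor `1_B(μ)` then gives the factorisation.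
-/

open MeasureTheory ProbabilityTheory

section

variable {Ω : Type*} {m m' m0 : MeasurableSpace Ω} {μ : Measure Ω}

theorem condExp_ae_eq_of_le_of_condExp_ae_eq [IsFiniteMeasure μ] (hm : m ≤ m') (hm' : m' ≤ m0)
    {X g : Ω → ℝ} (hg : StronglyMeasurable[m] g) (hXg : μ[X | m'] =ᵐ[μ] g) :
    μ[X | m] =ᵐ[μ] g :=
  calc μ[X | m] =ᵐ[μ] μ[μ[X | m'] | m] := (condExp_condExp_of_le hm hm').symm
    _ =ᵐ[μ] μ[g | m] := condExp_congr_ae hXg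
    _ = g := condExp_of_stronglyMeasurable (hm.trans hm') hg (integrable_condExp.congr hXg)

theorem condExp_mul_ae_eq_mul_condExp_of_condExp_ae_eq [IsFiniteMeasure μ] (hm : m ≤ m')
    (hm' : m' ≤ m0) {X Y : Ω → ℝ} {C : ℝ} (hX : Integrable X μ) (hY : StronglyMeasurable[m'] Y)
    (hYC : ∀ᵐ ω ∂μ, ‖Y ω‖ ≤ C) (hXm : μ[X | m'] =ᵐ[μ] μ[X | m]) :
    μ[X * Y | m] =ᵐ[μ] μ[X | m] * μ[Y | m] := by
  have hY' : AEStronglyMeasurable Y μ := (hY.mono hm').aestronglyMeasurable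
  have hXY : μ[X * Y | m'] =ᵐ[μ] μ[X | m] * Y :=
    (condExp_mul_of_stronglyMeasurable_right hY (hX.mul_bdd hY' hYC) hX).trans
      (hXm.mul (ae_eq_refl Y))
  calc μ[X * Y | m] =ᵐ[μ] μ[μ[X * Y | m'] | m] := (condExp_condExp_of_le hm hm').symm
    _ =ᵐ[μ] μ[μ[X | m] * Y | m] := condExp_congr_ae hXY
    _ =ᵐ[μ] μ[X | m] * μ[Y | m] :=
      condExp_mul_of_stronglyMeasurable_left stronglyMeasurable_condExp
        (integrable_condExp.mul_bdd hY' hYC) (Integrable.of_bound hY' C hYC)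

end

section

variable {Ω E F : Type*} {m0 : MeasurableSpace Ω} [MeasurableSpace E] [mF : MeasurableSpace F]
  {μ : Measure Ω} {W : Ω → E} {Y : Ω → F}

theorem ProbabilityTheory.IndepFun.cond_of_measurableSet_comap [IsFiniteMeasure μ]
    (hind : IndepFun W Y μ) (hY : Measurable Y) {T : Set Ω} (hT : MeasurableSet[mF.comap Y] T) :
    IndepFun W Y μ[|T] := by
  obtain ⟨S, hS, rfl⟩ := hT
  by_cases h0 : μ (Y ⁻¹' S) = 0
  · rw [cond_eq_zero_of_meas_eq_zero h0, indepFun_iff_measure_inter_preimage_eq_mul]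
    simp
  rw [indepFun_iff_measure_inter_preimage_eq_mul]
  intro A B hA hB
  have hAS : μ (Y ⁻¹' S ∩ W ⁻¹' A) = μ (W ⁻¹' A) * μ (Y ⁻¹' S) := by
    rw [Set.inter_comm]; exact hind.measure_inter_preimage_eq_mul A S hA hS
  have hABS : μ (Y ⁻¹' S ∩ (W ⁻¹' A ∩ Y ⁻¹' B)) = μ (W ⁻¹' A) * μ (Y ⁻¹' S ∩ Y ⁻¹' B) := by
    rw [Set.inter_left_comm, ← Set.preimage_inter]
    exact hind.measure_inter_preimage_eq_mul A _ hA (hS.inter hB)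
  simp only [cond_apply (hY hS), hAS, hABS]
  calc (μ (Y ⁻¹' S))⁻¹ * (μ (W ⁻¹' A) * μ (Y ⁻¹' S ∩ Y ⁻¹' B))
      = (μ (Y ⁻¹' S))⁻¹ * μ (Y ⁻¹' S) * μ (W ⁻¹' A) *
          ((μ (Y ⁻¹' S))⁻¹ * μ (Y ⁻¹' S ∩ Y ⁻¹' B)) := by
        rw [ENNReal.inv_mul_cancel h0 (measure_ne_top _ _)]; ring
    _ = _ := by ring

theorem condExp_comap_ae_eq_integral_map_of_indepFun [IsFiniteMeasure μ] (hW : Measurable W)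
    (hY : Measurable Y) (hind : IndepFun W Y μ) {f : E × F → ℝ} (hf : StronglyMeasurable f)
    {C : ℝ} (hfC : ∀ z, ‖f z‖ ≤ C) :
    μ[fun ω => f (W ω, Y ω) | mF.comap Y] =ᵐ[μ] fun ω => ∫ w, f (w, Y ω) ∂(μ.map W) := by
  set h : F → ℝ := fun y => ∫ w, f (w, y) ∂(μ.map W)
  have hh : StronglyMeasurable h := hf.integral_prod_left'
  have hprod : μ.map (fun ω => (W ω, Y ω)) = (μ.map W).prod (μ.map Y) :=
    (indepFun_iff_map_prod_eq_prod_map_map hW.aemeasurable hY.aemeasurable).mp hind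
  have hfm : Measurable fun ω => f (W ω, Y ω) := hf.measurable.comp (hW.prodMk hY)
  refine (ae_eq_condExp_of_forall_setIntegral_eq hY.comap_le
    (Integrable.of_bound hfm.aestronglyMeasurable C (ae_of_all _ fun _ => hfC _)) ?_ ?_
    (hh.comp_measurable (Measurable.of_comap_le le_rfl)).aestronglyMeasurable).symm
  · exact fun _ _ _ => (Integrable.of_bound (hh.comp_measurable hY).aestronglyMeasurable _
      (ae_of_all _ fun _ => norm_integral_le_of_norm_le_const (ae_of_all _ fun _ => hfC _)))
      |>.integrableOn
  · rintro _ ⟨K, hK, rfl⟩ -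
    calc ∫ ω in Y ⁻¹' K, h (Y ω) ∂μ = ∫ y in K, h y ∂(μ.map Y) :=
          (setIntegral_map hK hh.aestronglyMeasurable hY.aemeasurable).symm
      _ = ∫ z, f z ∂((μ.map W).prod ((μ.map Y).restrict K)) :=
          (integral_prod_symm f (Integrable.of_bound hf.aestronglyMeasurable C
            (ae_of_all _ hfC))).symm
      _ = ∫ z in Set.univ ×ˢ K, f z ∂(μ.map fun ω => (W ω, Y ω)) := by
          rw [hprod, ← Measure.prod_restrict, Measure.restrict_univ]
      _ = ∫ ω in Y ⁻¹' K, f (W ω, Y ω) ∂μ := by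
          rw [setIntegral_map (MeasurableSet.univ.prod hK) hf.aestronglyMeasurable
            (hW.prodMk hY).aemeasurable, Set.mk_preimage_prod, Set.preimage_univ, Set.univ_inter]

end

lemma norm_indicator_one_le {α : Type*} (s : Set α) (x : α) :
    ‖s.indicator (fun _ => (1 : ℝ)) x‖ ≤ 1 :=
  (norm_indicator_le_norm_self _ _).trans norm_one.le

theorem exists_indicator_comp_ae_eq_of_measurable_comap {Ω α β γ E : Type*}
    {m0 : MeasurableSpace Ω} [MeasurableSpace α] {mβ : MeasurableSpace β} [MeasurableSpace γ]
    [Zero E] {ν : Measure Ω} {X : Ω → α} {Y : Ω → β} {Y' : Ω → γ} {ψ : γ → β}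
    (hψ : Measurable ψ) (hYY' : ∀ᵐ ω ∂ν, Y ω = ψ (Y' ω)) (hX : Measurable[mβ.comap Y] X)
    {A : Set α} (hA : MeasurableSet A) (c : E) :
    ∃ D : Set γ, MeasurableSet D ∧
      (fun ω => A.indicator (fun _ => c) (X ω))
        =ᵐ[ν] fun ω => D.indicator (fun _ => c) (Y' ω) := by
  obtain ⟨C, hC, hCA⟩ := hX hA
  refine ⟨ψ ⁻¹' C, hψ hC, ?_⟩
  filter_upwards [hYY'] with ω hω
  have hmem : X ω ∈ A ↔ ψ (Y' ω) ∈ C := by rw [← hω]; exact (Set.ext_iff.mp hCA ω).symm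
  classical
  simp only [Set.indicator_apply, Set.mem_preimage, hmem]

theorem stmt_16_general {Ω S0 Z M M' R S : Type*}
    [MeasurableSpace Ω] [MeasurableSpace S0] [MeasurableSpace Z] [MeasurableSpace M]
    [MeasurableSpace M'] [MeasurableSpace R] [MeasurableSingletonClass R] [MeasurableSpace S]
    (P : Measure Ω) [IsProbabilityMeasure P]
    (X0 : Ω → S0) {t : ℕ} (ξ : Fin t → Ω → Z) (Φ : Ω → R) (μv : Ω → M)
    (μt : M → M') (Xt : Ω → S)
    (hX0 : Measurable X0) (hξ : ∀ i, Measurable (ξ i)) (hΦ : Measurable Φ)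
    (hμv : Measurable μv) (hμt : Measurable μt)
    (hind : IndepFun (fun ω => (X0 ω, fun i => ξ i ω)) (fun ω => (Φ ω, μv ω)) P)
    (hXt : Measurable[MeasurableSpace.comap
      (fun ω => (X0 ω, fun i => ξ i ω, Φ ω, μt (μv ω))) inferInstance] Xt)
    (φ : R)
    {A : Set S} (hA : MeasurableSet A) {B : Set M} (hB : MeasurableSet B) :
    condExp (MeasurableSpace.comap (fun ω => μt (μv ω)) inferInstance)
        (ProbabilityTheory.cond P {ω | Φ ω = φ})
        (fun ω => A.indicator (fun _ => (1:ℝ)) (Xt ω) * B.indicator (fun _ => (1:ℝ)) (μv ω))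
      =ᵐ[ProbabilityTheory.cond P {ω | Φ ω = φ}]
    fun ω =>
      (condExp (MeasurableSpace.comap (fun ω => μt (μv ω)) inferInstance)
        (ProbabilityTheory.cond P {ω | Φ ω = φ})
        (fun ω => A.indicator (fun _ => (1:ℝ)) (Xt ω)) ω)
      * (condExp (MeasurableSpace.comap (fun ω => μt (μv ω)) inferInstance)
        (ProbabilityTheory.cond P {ω | Φ ω = φ})
        (fun ω => B.indicator (fun _ => (1:ℝ)) (μv ω)) ω) := by
  set Pφ := P[|{ω | Φ ω = φ}]
  set W := fun ω => (X0 ω, fun i => ξ i ω)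
  have hW : Measurable W := hX0.prodMk (measurable_pi_lambda _ hξ)
  have hm : MeasurableSpace.comap (fun ω => μt (μv ω)) inferInstance ≤
      MeasurableSpace.comap μv inferInstance :=
    (hμt.comp (comap_measurable μv)).comap_le
  have hindφ : IndepFun W μv Pφ :=
    (hind.cond_of_measurableSet_comap (hΦ.prodMk hμv) ⟨{φ} ×ˢ Set.univ,
      (measurableSet_singleton φ).prod .univ, by ext; simp⟩).comp measurable_id measurable_snd
  obtain ⟨D, hD, hXD⟩ := exists_indicator_comp_ae_eq_of_measurable_comap
    (Y' := fun ω => (W ω, μt (μv ω))) (ψ := fun p => (p.1.1, p.1.2, φ, p.2)) (by fun_prop)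
    (by filter_upwards [ae_cond_mem (hΦ (measurableSet_singleton φ))] with ω (hω : Φ ω = φ)
        simp [W, hω])
    hXt hA (1 : ℝ)
  set k : M' → ℝ := fun y => ∫ w, D.indicator (fun _ => (1 : ℝ)) (w, y) ∂(Pφ.map W)
  have hk : StronglyMeasurable[MeasurableSpace.comap (fun ω => μt (μv ω)) inferInstance]
      fun ω => k (μt (μv ω)) :=
    (measurable_const.indicator hD).stronglyMeasurable.integral_prod_left'.comp_measurable
      (comap_measurable _)
  have hXk : Pφ[fun ω => A.indicator (fun _ => (1 : ℝ)) (Xt ω) |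
      MeasurableSpace.comap μv inferInstance] =ᵐ[Pφ] fun ω => k (μt (μv ω)) :=
    (condExp_congr_ae hXD).trans (condExp_comap_ae_eq_integral_map_of_indepFun hW hμv hindφ
      (f := fun z => D.indicator (fun _ => (1 : ℝ)) (z.1, μt z.2))
      ((measurable_const.indicator hD).comp (by fun_prop)).stronglyMeasurable
      (fun _ => norm_indicator_one_le _ _))
  have hXt0 : Measurable Xt := hXt.mono (by fun_prop : Measurable _).comap_le le_rfl
  exact condExp_mul_ae_eq_mul_condExp_of_condExp_ae_eq hm hμv.comap_le
    (Integrable.of_bound ((measurable_const.indicator hA).comp hXt0).aestronglyMeasurable 1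
      (ae_of_all _ fun _ => norm_indicator_one_le _ _))
    ((measurable_const.indicator hB).comp (comap_measurable μv)).stronglyMeasurable
    (ae_of_all _ fun _ => norm_indicator_one_le _ _)
    (hXk.trans (condExp_ae_eq_of_le_of_condExp_ae_eq hm hμv.comap_le hk hXk).symm)

/-- If `(X_0, ξ)` is independent of `(Φ, μ)`, `X^{(t)}` is measurable with
respect to `σ(X_0, ξ_1,…,ξ_t, Φ, μ^{(t)})` where `μ^{(t)}` is a measurable function of `μ`,
and `φ` is an atom of `Φ`, then under `P_φ = P(·|Φ=φ)`, `X^{(t)}` and `μ` are conditionally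
independent given `μ^{(t)}`:
`E_φ[1_A(X^{(t)})·1_B(μ) | μ^{(t)}] = E_φ[1_A(X^{(t)}) | μ^{(t)}]·E_φ[1_B(μ) | μ^{(t)}]` a.s. -/
theorem stmt_16 {Ω S0 Z M M' R S : Type*}
    [MeasurableSpace Ω] [MeasurableSpace S0] [MeasurableSpace Z] [MeasurableSpace M]
    [MeasurableSpace M'] [MeasurableSpace R] [MeasurableSingletonClass R] [MeasurableSpace S]
    (P : Measure Ω) [IsProbabilityMeasure P]
    (X0 : Ω → S0) {t : ℕ} (ξ : Fin t → Ω → Z) (Φ : Ω → R) (μv : Ω → M)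
    (μt : M → M') (Xt : Ω → S)
    (hX0 : Measurable X0) (hξ : ∀ i, Measurable (ξ i)) (hΦ : Measurable Φ)
    (hμv : Measurable μv) (hμt : Measurable μt)
    (hind : IndepFun (fun ω => (X0 ω, fun i => ξ i ω)) (fun ω => (Φ ω, μv ω)) P)
    (hXt : Measurable[MeasurableSpace.comap
      (fun ω => (X0 ω, fun i => ξ i ω, Φ ω, μt (μv ω))) inferInstance] Xt)
    (φ : R) (hφ : P {ω | Φ ω = φ} ≠ 0)
    {A : Set S} (hA : MeasurableSet A) {B : Set M} (hB : MeasurableSet B) :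
    condExp (MeasurableSpace.comap (fun ω => μt (μv ω)) inferInstance)
        (ProbabilityTheory.cond P {ω | Φ ω = φ})
        (fun ω => A.indicator (fun _ => (1:ℝ)) (Xt ω) * B.indicator (fun _ => (1:ℝ)) (μv ω))
      =ᵐ[ProbabilityTheory.cond P {ω | Φ ω = φ}]
    fun ω =>
      (condExp (MeasurableSpace.comap (fun ω => μt (μv ω)) inferInstance)
        (ProbabilityTheory.cond P {ω | Φ ω = φ})
        (fun ω => A.indicator (fun _ => (1:ℝ)) (Xt ω)) ω)
      * (condExp (MeasurableSpace.comap (fun ω => μt (μv ω)) inferInstance)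
        (ProbabilityTheory.cond P {ω | Φ ω = φ})
        (fun ω => B.indicator (fun _ => (1:ℝ)) (μv ω)) ω) :=
  stmt_16_general P X0 ξ Φ μv μt Xt hX0 hξ hΦ hμv hμt hind hXt φ hA hB
end
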